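/- For all n ≥ 1, R(n) = Σ_{k=0}^{n−1} C(k, ⌊k/2⌋)·C(n−k−1, ⌊(n−k−1)/2⌋), where R(n) is the total number of right steps in all dispersed Dyck paths of length n. -/

import Mathlib

inductive DStep | up | down | right
deriving DecidableEq, Repr

instance : Fintype DStep :=
  ⟨{DStep.up, DStep.down, DStep.right}, fun x => by cases x <;> simp⟩

/-- Run a dispersed Dyck path from height `h`; `none` if an illegal step occurs,
otherwise the final height. Down steps require positive height; right steps require height 0. -/
def DStep.run : ℕ → List DStep → Option ℕ
  | h, [] => some h
  | h, .up :: l => DStep.run (h + 1) l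
  | h + 1, .down :: l => DStep.run h l
  | 0, .down :: _ => none
  | 0, .right :: l => DStep.run 0 l
  | _ + 1, .right :: _ => none

/-- A dispersed Dyck path: starts and ends at height 0, all steps legal. -/
def IsDDP (l : List DStep) : Prop := DStep.run 0 l = some 0

instance : DecidablePred IsDDP := fun l => by unfold IsDDP; infer_instance

/-- The finset of all dispersed Dyck paths of length `n`. -/
def DDPs (n : ℕ) : Finset (List.Vector DStep n) :=
  Finset.univ.filter (fun v => IsDDP v.toList)

/-- Number of dispersed Dyck paths of length `n`. -/
def dD (n : ℕ) : ℕ := (DDPs n).card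

/-- Total number of up steps over all DDPs of length `n`. -/
def U (n : ℕ) : ℕ := ∑ v ∈ DDPs n, v.toList.count DStep.up

/-- Total number of down steps over all DDPs of length `n`. -/
def D (n : ℕ) : ℕ := ∑ v ∈ DDPs n, v.toList.count DStep.down

/-- Total number of right steps over all DDPs of length `n`. -/
def R (n : ℕ) : ℕ := ∑ v ∈ DDPs n, v.toList.count DStep.right

/-- `i` is the position of a 1-ascent in `l`: an up step with no adjacent up step. -/
def IsOneAscentAt (l : List DStep) (i : ℕ) : Prop :=
  l[i]? = some .up ∧ l[i + 1]? ≠ some .up ∧ (i = 0 ∨ l[i - 1]? ≠ some .up)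

instance (l : List DStep) : DecidablePred (IsOneAscentAt l) := fun i => by
  unfold IsOneAscentAt; infer_instance

/-- Number of 1-ascents in `l`. -/
def oneAsc (l : List DStep) : ℕ :=
  ((Finset.range l.length).filter (IsOneAscentAt l)).card

/-- Total number of 1-ascents over all DDPs of length `n`. -/
def A (n : ℕ) : ℕ := ∑ v ∈ DDPs n, oneAsc v.toList

/-- Signed final height of a plain path (ignoring any right steps). -/
def psum : List DStep → ℤ
  | [] => 0
  | .up :: l => 1 + psum l
  | .down :: l => -1 + psum l
  | .right :: l => psum l

/-!
Cutting a DDP at a right step leaves two DDPs, and gluing two DDPs with a right step in between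
gives a DDP, so the DDPs of length `n` with a right step at position `k` are counted by
`d(k) d(n - k - 1)`; summing over `k` counts every right step exactly once. The count
`d(m) = C(m, ⌊m/2⌋)` is the case `h = 0` of the count `C(n, ⌊(n + h + 1)/2⌋)` of legal paths of
length `n` from height `h` down to `0`, which follows Pascal's rule in `n`.
-/

open Finset

theorem List.count_eq_card_filter_getElem? {α : Type*} [DecidableEq α] (l : List α) (a : α) :
    l.count a = #{i ∈ Finset.range l.length | l[i]? = some a} := by
  induction l with
  | nil => simp
  | cons b t ih =>
    rw [card_filter, List.count_cons, ih, card_filter, List.length_cons, Finset.sum_range_succ']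
    simp [beq_iff_eq]

theorem List.take_append_cons_drop_of_getElem?_eq_some {α : Type*} {l : List α} {k : ℕ} {a : α}
    (h : l[k]? = some a) : l.take k ++ a :: l.drop (k + 1) = l := by
  obtain ⟨hk, rfl⟩ := List.getElem?_eq_some_iff.mp h
  rw [← List.drop_eq_getElem_cons hk, List.take_append_drop]

theorem List.Vector.card_filter_succ {α : Type*} [Fintype α] (n : ℕ) (P : List α → Prop)
    [DecidablePred P] :
    #{v : List.Vector α (n + 1) | P v.toList} =
      ∑ a, #{v : List.Vector α n | P (a :: v.toList)} := by
  let e : List.Vector α (n + 1) ≃ α × List.Vector α n :=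
    { toFun := fun v => (v.head, v.tail)
      invFun := fun p => p.1 ::ᵥ p.2
      left_inv := List.Vector.cons_head_tail
      right_inv := fun p => by simp }
  simp only [card_filter]
  rw [← Fintype.sum_prod_type']
  exact Fintype.sum_equiv e _ _ fun v => by
    rw [← v.cons_head_tail, List.Vector.toList_cons]; rfl

theorem Nat.choose_succ_div_two (n : ℕ) : n.choose ((n + 1) / 2) = n.choose (n / 2) := by
  rcases Nat.even_or_odd' n with ⟨m, rfl | rfl⟩
  · rw [show (2 * m + 1) / 2 = 2 * m / 2 by omega]
  · rw [show (2 * m + 1 + 1) / 2 = m + 1 by omega, show (2 * m + 1) / 2 = m by omega,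
      Nat.choose_symm_half]

theorem DStep.sum_univ {M : Type*} [AddCommMonoid M] (f : DStep → M) :
    ∑ s, f s = f .up + f .down + f .right := by
  rw [show (univ : Finset DStep) = {.up, .down, .right} from rfl, sum_insert (by decide),
    sum_pair (by decide), add_assoc]

theorem DStep.run_append (h : ℕ) (l₁ l₂ : List DStep) :
    DStep.run h (l₁ ++ l₂) = (DStep.run h l₁).bind (DStep.run · l₂) := by
  induction l₁ generalizing h with
  | nil => simp [DStep.run]
  | cons s l ih => cases s <;> cases h <;> simp [DStep.run, ih]

def DDPsFrom (h n : ℕ) : Finset (List.Vector DStep n) := {v | DStep.run h v.toList = some 0}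

/-- At height `0` the right step takes the place of the forbidden down step, which is why the
truncated subtraction `h - 1` is the right index in both cases. -/
theorem card_DDPsFrom_succ (h n : ℕ) :
    #(DDPsFrom h (n + 1)) = #(DDPsFrom (h + 1) n) + #(DDPsFrom (h - 1) n) := by
  rw [DDPsFrom, List.Vector.card_filter_succ n (DStep.run h · = some 0), DStep.sum_univ]
  cases h <;> simp [DStep.run, DDPsFrom] <;> rfl

theorem card_DDPsFrom (h n : ℕ) : #(DDPsFrom h n) = n.choose ((n + h + 1) / 2) := by
  induction n generalizing h with
  | zero =>
    rcases h with _ | h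
    · rfl
    · rw [Nat.choose_eq_zero_of_lt (by omega)]
      simp [DDPsFrom, DStep.run]
  | succ n ih =>
    rw [card_DDPsFrom_succ, ih, ih]
    rcases h with _ | h
    · rw [show (n + 1 + 0 + 1) / 2 = n / 2 + 1 by omega, show n + (0 - 1) + 1 = n + 1 by omega,
        Nat.choose_succ_div_two, add_comm]
      exact (Nat.choose_succ_succ' n (n / 2)).symm
    · rw [show (n + 1 + (h + 1) + 1) / 2 = (n + h + 1) / 2 + 1 by omega,
        show (n + (h + 1 + 1) + 1) / 2 = (n + h + 1) / 2 + 1 by omega,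
        show n + (h + 1 - 1) + 1 = n + h + 1 by omega, add_comm]
      exact (Nat.choose_succ_succ' n _).symm

theorem card_DDPs (n : ℕ) : #(DDPs n) = n.choose (n / 2) := by
  rw [show DDPs n = DDPsFrom 0 n from rfl, card_DDPsFrom, add_zero, Nat.choose_succ_div_two]

theorem mem_DDPs {n : ℕ} {v : List.Vector DStep n} : v ∈ DDPs n ↔ IsDDP v.toList := by
  simp [DDPs]

theorem isDDP_append_right_cons {l₁ l₂ : List DStep} :
    IsDDP (l₁ ++ .right :: l₂) ↔ IsDDP l₁ ∧ IsDDP l₂ := by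
  rw [IsDDP, IsDDP, IsDDP, DStep.run_append]
  rcases DStep.run 0 l₁ with _ | _ | b <;> simp [DStep.run]

theorem card_DDPs_filter_right {n k : ℕ} (hk : k < n) :
    #{v ∈ DDPs n | v.toList[k]? = some .right} = #(DDPs k) * #(DDPs (n - k - 1)) := by
  rw [← card_product]
  refine card_nbij'
    (fun v => ((⟨v.toList.take k, by simp; omega⟩ : List.Vector DStep k),
      (⟨v.toList.drop (k + 1), by simp; omega⟩ : List.Vector DStep (n - k - 1))))
    (fun p => (⟨p.1.toList ++ .right :: p.2.toList, by simp; omega⟩ : List.Vector DStep n))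
    ?_ ?_ ?_ ?_
  · intro v hv
    rw [mem_coe, mem_filter, mem_DDPs] at hv
    rw [mem_coe, mem_product, mem_DDPs, mem_DDPs, ← isDDP_append_right_cons]
    simpa only [List.Vector.toList_mk, List.take_append_cons_drop_of_getElem?_eq_some hv.2]
      using hv.1
  · rintro ⟨v₁, v₂⟩ hv
    rw [mem_coe, mem_product, mem_DDPs, mem_DDPs, ← isDDP_append_right_cons] at hv
    refine mem_filter.mpr ⟨mem_DDPs.mpr hv, ?_⟩
    simp
  · intro v hv
    rw [mem_coe, mem_filter] at hv
    exact List.Vector.toList_injective (List.take_append_cons_drop_of_getElem?_eq_some hv.2)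
  · rintro ⟨v₁, v₂⟩ -
    refine Prod.ext (List.Vector.toList_injective ?_) (List.Vector.toList_injective ?_) <;>
      simp [List.drop_append]

theorem right_convolution_general (n : ℕ) :
    R n = ∑ k ∈ Finset.range n, k.choose (k / 2) * (n - k - 1).choose ((n - k - 1) / 2) := by
  have hcount (v : List.Vector DStep n) :
      v.toList.count .right = #{k ∈ range n | v.toList[k]? = some .right} := by
    rw [List.count_eq_card_filter_getElem?, v.toList_length]
  simp only [R, hcount]
  refine (sum_card_bipartiteAbove_eq_sum_card_bipartiteBelow
    (fun (v : List.Vector DStep n) k => v.toList[k]? = some DStep.right)).trans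
    (sum_congr rfl fun k hk => ?_)
  rw [bipartiteBelow, card_DDPs_filter_right (mem_range.mp hk), card_DDPs, card_DDPs]

/-- For `n ≥ 1`, the total number of right steps over all DDPs of length `n` equals the
convolution `Σ_{k=0}^{n−1} C(k,⌊k/2⌋)·C(n−k−1,⌊(n−k−1)/2⌋)`. -/
theorem right_convolution (n : ℕ) (hn : 1 ≤ n) :
    R n = ∑ k ∈ Finset.range n, k.choose (k / 2) * (n - k - 1).choose ((n - k - 1) / 2) :=
  right_convolution_general n
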